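/- Let G = A ∗ B be a free product where A and B are nilpotent groups of class at most k containing elements x ∈ A, y ∈ B each of order 2. Then the maximal nil_k subgroup H = ⟨xy⟩ of G is not malnormal; in particular, G is not CSN_k. -/

import Mathlib

variable {G : Type*} [Group G]

/-- A subgroup is `nil_k`: nilpotent of class at most `k` (i.e. γ_{k+1} = 1). -/
def SubNilK (k : ℕ) (H : Subgroup G) : Prop := Subgroup.lowerCentralSeries (⊤ : Subgroup ↥H) k = ⊥

/-- A subgroup `H ≤ G` is malnormal: `H ∩ g⁻¹Hg = 1` for all `g ∉ H`. -/
def Malnormal (H : Subgroup G) : Prop :=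
  ∀ g ∉ H, ∀ y ∈ H, g * y * g⁻¹ ∈ H → y = 1

/-- `H` is a maximal nil_k subgroup of `G`. -/
def MaxNilK (k : ℕ) (H : Subgroup G) : Prop :=
  SubNilK k H ∧ ∀ K : Subgroup G, SubNilK k K → H ≤ K → K = H

/-- `G` is NT_k: any two nil_k subgroups with nontrivial intersection generate
a nil_k subgroup. -/
def IsNTk (k : ℕ) (G : Type*) [Group G] : Prop :=
  ∀ K₁ K₂ : Subgroup G, SubNilK k K₁ → SubNilK k K₂ → K₁ ⊓ K₂ ≠ ⊥ →
    SubNilK k (K₁ ⊔ K₂)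

/-- `G` is CSN_k: every maximal nil_k subgroup is malnormal. -/
def IsCSNk (k : ℕ) (G : Type*) [Group G] : Prop :=
  ∀ H : Subgroup G, MaxNilK k H → Malnormal H

/-- `C^k_G(x) = { y : ⟨x, y⟩ is nilpotent of class at most k }`. -/
def CkSet (k : ℕ) (x : G) : Set G :=
  { y | SubNilK k (Subgroup.closure {x, y}) }

set_option linter.unusedSectionVars false
open Monoid CoprodI CoprodI.Word

namespace Stmt11Aux
variable {ι : Type*} {G : ι → Type*} [∀ i, Group (G i)] [DecidableEq ι] [∀ i, DecidableEq (G i)]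

theorem equiv_def (g : Monoid.CoprodI G) : Word.equiv g = g • Word.empty := rfl

theorem equiv_mul (g h : Monoid.CoprodI G) : Word.equiv (g * h) = g • Word.equiv h := by
  rw [equiv_def, equiv_def, mul_smul]

theorem equiv_prod (w : Word G) : Word.equiv w.prod = w := Word.equiv.apply_symm_apply w

theorem prod_equiv (g : Monoid.CoprodI G) : (Word.equiv g).prod = g := Word.equiv.symm_apply_apply g

theorem equiv_one : Word.equiv (1 : Monoid.CoprodI G) = Word.empty := by rw [equiv_def, one_smul]

theorem smul_toList_of_fstIdx_ne {i} (a : G i) (ha : a ≠ 1) (w : Word G) (h : w.fstIdx ≠ some i) :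
    (of a • w).toList = ⟨i, a⟩ :: w.toList := by
  rw [of_smul_def, equivPair_eq_of_fstIdx_ne h]
  simp [rcons, ha, cons]

theorem equivPair_dichotomy (i : ι) (w : Word G) :
    ((equivPair i w).head = 1 ∧ (equivPair i w).tail = w) ∨
    ((equivPair i w).head ≠ 1 ∧
      w.toList = ⟨i, (equivPair i w).head⟩ :: (equivPair i w).tail.toList) := by
  by_cases h : (equivPair i w).head = 1
  · left
    refine ⟨h, ?_⟩
    have h2 := equivPair_head_smul_equivPair_tail (i := i) w
    rw [h] at h2
    rwa [map_one, one_smul] at h2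
  · right
    refine ⟨h, ?_⟩
    have h2 := equivPair_head_smul_equivPair_tail (i := i) w
    conv_lhs => rw [← h2]
    rw [smul_toList_of_fstIdx_ne _ h _ (equivPair i w).fstIdx_ne]

theorem length_rcons_le {i : ι} (p : Pair G i) :
    (rcons p).toList.length ≤ p.tail.toList.length + 1 := by
  rw [rcons]
  split_ifs <;> simp [cons]

theorem length_smul_le {i} (a : G i) (w : Word G) :
    (of a • w).toList.length ≤ w.toList.length + 1 := by
  rw [of_smul_def]
  refine (length_rcons_le _).trans ?_
  simp only [Nat.add_le_add_iff_right]
  rcases equivPair_dichotomy i w with ⟨_, h⟩ | ⟨_, h⟩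
  · rw [h]
  · rw [h]; simp

theorem length_smul_le_of_fstIdx {i} (a : G i) (w : Word G) (h : w.fstIdx = some i) :
    (of a • w).toList.length ≤ w.toList.length := by
  rcases equivPair_dichotomy i w with ⟨h1, h2⟩ | ⟨h1, h2⟩
  · -- head = 1 impossible: fstIdx w = some i means first letter has index i and is ≠ 1
    exfalso
    rcases w with ⟨l, hne, hch⟩
    cases l with
    | nil => simp [fstIdx] at h
    | cons p t =>
      obtain ⟨j, b⟩ := p
      simp only [fstIdx, List.head?, Option.map_some] at h
      have hji : j = i := by simpa using h
      subst hji
      have := equivPair_head (i := j) (w := ⟨⟨j, b⟩ :: t, hne, hch⟩)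
      rw [this] at h1
      rw [dif_pos ⟨by simp, rfl⟩] at h1
      exact hne ⟨j, b⟩ (by simp) h1
  · rw [of_smul_def]
    refine (length_rcons_le _).trans ?_
    rw [h2]
    simp

theorem prod_smul_toList (w : Word G) : ∀ (u : Word G),
    List.Chain' (fun a b => a.1 ≠ b.1) (u.toList ++ w.toList) →
    ((u.prod) • w).toList = u.toList ++ w.toList := by
  intro u
  induction u using consRecOn with
  | empty => intro _; simp [prod_empty]
  | cons i m u' h1 h2 ih =>
    intro h
    simp only [cons] at h
    rw [List.Chain', List.cons_append, List.isChain_cons] at h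
    have h3 : (u'.prod • w).toList = u'.toList ++ w.toList := ih h.2
    have h4 : (u'.prod • w).fstIdx ≠ some i := by
      rw [fstIdx, h3]
      intro hc
      obtain ⟨l, hl, hl2⟩ := Option.map_eq_some_iff.mp hc
      exact h.1 l hl hl2.symm
    rw [prod_cons, mul_smul, smul_toList_of_fstIdx_ne m h2 _ h4, h3]
    simp [cons]

/-- the inverse of a reduced word, as a list -/
def invList (l : List (Σ i, G i)) : List (Σ i, G i) :=
  (l.map fun p => ⟨p.1, p.2⁻¹⟩).reverse

@[simp] theorem invList_nil : invList ([] : List (Σ i, G i)) = [] := rfl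

theorem invList_cons {l : List (Σ i, G i)} {p : Σ i, G i} :
    invList (p :: l) = invList l ++ [⟨p.1, p.2⁻¹⟩] := by
  simp [invList]

@[simp] theorem length_invList (l : List (Σ i, G i)) : (invList l).length = l.length := by
  simp [invList]

theorem head?_invList (l : List (Σ i, G i)) :
    (invList l).head? = l.getLast?.map fun p => ⟨p.1, p.2⁻¹⟩ := by
  simp [invList, List.head?_reverse, List.getLast?_map]

theorem getLast?_invList (l : List (Σ i, G i)) :
    (invList l).getLast? = l.head?.map fun p => ⟨p.1, p.2⁻¹⟩ := by
  simp [invList, List.getLast?_reverse, List.head?_map]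

theorem equiv_of {i} (a : G i) (ha : a ≠ 1) : (Word.equiv (of a)).toList = [⟨i, a⟩] := by
  rw [equiv_def, smul_toList_of_fstIdx_ne a ha _ (by simp [fstIdx, Word.empty])]
  rfl

theorem equiv_inv_toList : ∀ (w : Word G), (Word.equiv (w.prod⁻¹)).toList = invList w.toList := by
  intro w
  induction w using consRecOn with
  | empty => simp [prod_empty, equiv_one]
  | cons i m u' h1 h2 ih =>
    rw [prod_cons, mul_inv_rev, ← map_inv]
    set u'' := Word.equiv (u'.prod⁻¹) with hu''
    have hprod : u''.prod = u'.prod⁻¹ := prod_equiv _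
    have hm : (m⁻¹ : G i) ≠ 1 := inv_ne_one.mpr h2
    have hsingle : (Word.equiv (of (m⁻¹ : G i))).toList = [⟨i, m⁻¹⟩] := equiv_of _ hm
    have hchain : List.Chain' (fun a b : (Σ i, G i) => a.1 ≠ b.1)
        (u''.toList ++ (Word.equiv (of (m⁻¹ : G i))).toList) := by
      rw [hsingle, List.Chain', List.isChain_append]
      refine ⟨u''.chain_ne, List.isChain_singleton _, ?_⟩
      intro p hp q hq
      simp only [List.head?_cons, Option.mem_def, Option.some.injEq] at hq
      subst hq
      rw [ih, getLast?_invList, Option.mem_def, Option.map_eq_some_iff] at hp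
      obtain ⟨l0, hl0, rfl⟩ := hp
      intro hc
      apply h1
      rw [fstIdx, hl0]
      simp only at hc
      simp [hc]
    have := prod_smul_toList (Word.equiv (of (m⁻¹ : G i))) u'' hchain
    rw [hprod] at this
    have heq : u'.prod⁻¹ * of (m⁻¹ : G i) = u'.prod⁻¹ • (of (m⁻¹ : G i)) := rfl
    calc (Word.equiv (u'.prod⁻¹ * of (m⁻¹ : G i))).toList
        = (u'.prod⁻¹ • Word.equiv (of (m⁻¹ : G i))).toList := by rw [equiv_mul]
      _ = u''.toList ++ (Word.equiv (of (m⁻¹ : G i))).toList := this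
      _ = invList (cons m u' h1 h2).toList := by
          rw [ih, hsingle]
          simp [cons, invList_cons]

theorem equiv_inv_toList' (g : Monoid.CoprodI G) :
    (Word.equiv g⁻¹).toList = invList (Word.equiv g).toList := by
  have := equiv_inv_toList (Word.equiv g)
  rwa [prod_equiv] at this

theorem length_equiv_inv (g : Monoid.CoprodI G) :
    (Word.equiv g⁻¹).toList.length = (Word.equiv g).toList.length := by
  rw [equiv_inv_toList', length_invList]

theorem length_prod_smul_le : ∀ (u w : Word G),
    ((u.prod) • w).toList.length ≤ u.toList.length + w.toList.length := by
  intro u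
  induction u using consRecOn with
  | empty => intro w; simp [prod_empty]
  | cons i m u' h1 h2 ih =>
    intro w
    rw [prod_cons, mul_smul]
    refine (length_smul_le m _).trans ?_
    have := ih w
    simp only [cons, List.length_cons]
    omega

theorem length_mul_le (a b : Monoid.CoprodI G) :
    (Word.equiv (a * b)).toList.length ≤
      (Word.equiv a).toList.length + (Word.equiv b).toList.length := by
  rw [equiv_mul]
  conv_lhs => rw [show a = (Word.equiv a).prod from (prod_equiv a).symm]
  exact length_prod_smul_le _ _

theorem equivPair_head_ne_one {i : ι} (w : Word G) (h : w.fstIdx = some i) :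
    (equivPair i w).head ≠ 1 := by
  rcases w with ⟨l, hne, hch⟩
  cases l with
  | nil => simp [fstIdx] at h
  | cons p t =>
    obtain ⟨j, b⟩ := p
    simp only [fstIdx, List.head?, Option.map_some] at h
    have hji : j = i := by simpa using h
    subst hji
    have := equivPair_head (i := j) (w := ⟨⟨j, b⟩ :: t, hne, hch⟩)
    rw [this, dif_pos ⟨by simp, rfl⟩]
    exact fun hc => hne ⟨j, b⟩ (by simp) hc

theorem equivPair_toList {i : ι} {a : G i} {T : List (Σ i, G i)} (w : Word G)
    (h : w.toList = ⟨i, a⟩ :: T) :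
    (equivPair i w).head = a ∧ (equivPair i w).tail.toList = T := by
  have hf : w.fstIdx = some i := by rw [fstIdx, h]; rfl
  have hne := equivPair_head_ne_one w hf
  rcases equivPair_dichotomy i w with ⟨h1, _⟩ | ⟨_, h2⟩
  · exact absurd h1 hne
  · rw [h] at h2
    simp only [List.cons.injEq, Sigma.mk.inj_iff, heq_eq_eq, true_and] at h2
    exact ⟨h2.1.symm, h2.2.symm⟩

theorem smul_equivPair_tail {i : ι} {a : G i} {T : List (Σ i, G i)} (g : Monoid.CoprodI G)
    (h : (Word.equiv g).toList = ⟨i, a⟩ :: T) :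
    of a • (equivPair i (Word.equiv g)).tail = Word.equiv g := by
  obtain ⟨h1, _⟩ := equivPair_toList _ h
  conv_rhs => rw [← equivPair_head_smul_equivPair_tail (i := i) (Word.equiv g)]
  rw [h1]

theorem equiv_mul_toList (u v : Monoid.CoprodI G)
    (hj : ∀ p ∈ (Word.equiv u).toList.getLast?, ∀ q ∈ (Word.equiv v).toList.head?, p.1 ≠ q.1) :
    (Word.equiv (u * v)).toList = (Word.equiv u).toList ++ (Word.equiv v).toList := by
  rw [equiv_mul]
  conv_lhs => rw [show u = (Word.equiv u).prod from (prod_equiv u).symm]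
  apply prod_smul_toList
  rw [List.Chain', List.isChain_append]
  exact ⟨(Word.equiv u).chain_ne, (Word.equiv v).chain_ne, hj⟩

section Main

variable {f : Bool → Type*} [∀ b, Group (f b)] [∀ b, DecidableEq (f b)]
variable (x : f false) (y : f true)

def cList : ℕ → List (Σ b, f b)
  | 0 => []
  | n+1 => ⟨false, x⟩ :: ⟨true, y⟩ :: cList n

theorem cList_length : ∀ n, (cList x y n).length = 2 * n := by
  intro n
  induction n with
  | zero => rfl
  | succ n ih => simp [cList, ih]; omega

theorem cList_head? (n : ℕ) : (cList x y (n+1)).head? = some ⟨false, x⟩ := rfl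

theorem cList_getLast? : ∀ n, (cList x y (n+1)).getLast? = some ⟨true, y⟩ := by
  intro n
  induction n with
  | zero => rfl
  | succ n ih =>
    show (⟨false, x⟩ :: ⟨true, y⟩ :: cList x y (n+1)).getLast? = _
    rw [List.getLast?_cons_cons]
    cases h : cList x y (n+1) with
    | nil => exact absurd (congrArg List.length h) (by simp [cList_length])
    | cons a l =>
      rw [show (⟨true, y⟩ : Σ b, f b) :: a :: l = [⟨true, y⟩] ++ (a :: l) by simp,
        List.getLast?_append_of_ne_nil _ (by simp), ← h]
      exact ih

theorem cList_ne_one (hx1 : x ≠ 1) (hy1 : y ≠ 1) :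
    ∀ n, ∀ l ∈ cList x y n, Sigma.snd l ≠ 1 := by
  intro n
  induction n with
  | zero => simp [cList]
  | succ n ih =>
    intro l hl
    simp only [cList, List.mem_cons] at hl
    rcases hl with rfl | rfl | hl
    · exact hx1
    · exact hy1
    · exact ih l hl

theorem cList_chain' : ∀ n, List.Chain' (fun a b : Σ b, f b => a.1 ≠ b.1) (cList x y n) := by
  intro n
  induction n with
  | zero => exact List.isChain_nil
  | succ n ih =>
    simp only [cList]
    rw [List.Chain', List.isChain_cons_cons]
    refine ⟨by simp, ?_⟩
    rw [List.isChain_cons]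
    refine ⟨?_, ih⟩
    intro p hp
    cases n with
    | zero => simp [cList] at hp
    | succ n =>
      rw [cList_head?] at hp
      simp only [Option.mem_def, Option.some.injEq] at hp
      subst hp
      simp

def zWord (hx1 : x ≠ 1) (hy1 : y ≠ 1) (n : ℕ) : Word f :=
  ⟨cList x y n, cList_ne_one x y hx1 hy1 n, cList_chain' x y n⟩

theorem prod_zWord (hx1 : x ≠ 1) (hy1 : y ≠ 1) : ∀ n,
    (zWord x y hx1 hy1 n).prod = (of x * of y) ^ n := by
  intro n
  induction n with
  | zero => simp [zWord, cList, Word.prod]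
  | succ n ih =>
    rw [pow_succ']
    rw [← ih]
    simp [zWord, cList, Word.prod]
    rw [mul_assoc]

theorem equiv_zpow_toList (hx1 : x ≠ 1) (hy1 : y ≠ 1) (n : ℕ) :
    (Word.equiv ((of x * of y) ^ n : Monoid.CoprodI f)).toList = cList x y n := by
  rw [← prod_zWord x y hx1 hy1 n, equiv_prod]
  rfl


theorem descent {i : Bool} {a : f i} {T : List (Σ b, f b)} (g : Monoid.CoprodI f) (b : f i)
    (hba : b * a = 1) (h : (Word.equiv g).toList = ⟨i, a⟩ :: T) :
    (Word.equiv (of b * g)).toList = T := by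
  have hsm := smul_equivPair_tail g h
  have htl := (equivPair_toList _ h).2
  rw [equiv_mul, ← hsm, ← mul_smul, ← map_mul, hba, map_one, one_smul]
  exact htl

theorem main_commute (hx1 : x ≠ 1) (hx2 : x * x = 1) (hy1 : y ≠ 1) (hy2 : y * y = 1) :
    ∀ (N : ℕ) (g : Monoid.CoprodI f) (m : ℕ), 0 < m →
      (Word.equiv g).toList.length ≤ N →
      g * (of x * of y) ^ m = (of x * of y) ^ m * g →
      g ∈ Subgroup.zpowers (of x * of y) := by
  have hxinv : (x : f false)⁻¹ = x := inv_eq_of_mul_eq_one_right hx2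
  have hyinv : (y : f true)⁻¹ = y := inv_eq_of_mul_eq_one_right hy2
  intro N
  induction N with
  | zero =>
    intro g m hm hlen _
    have h0 : (Word.equiv g).toList = [] := List.length_eq_zero_iff.mp (Nat.le_zero.mp hlen)
    have hg : g = 1 := by
      have hp := prod_equiv g
      rw [show Word.equiv g = Word.empty from Word.ext (by rw [h0]; rfl)] at hp
      rw [← hp, prod_empty]
    rw [hg]
    exact one_mem _
  | succ N ih =>
    intro g m hm hlen hcomm
    obtain ⟨m', rfl⟩ : ∃ m', m = m' + 1 := ⟨m - 1, (Nat.succ_pred_eq_of_pos hm).symm⟩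
    have hzw : Commute (of x * of y) ((of x * of y) ^ (m' + 1) : Monoid.CoprodI f) :=
      (Commute.refl _).pow_right _
    have hgw : Commute g ((of x * of y) ^ (m' + 1) : Monoid.CoprodI f) := hcomm
    have hcm : (Word.equiv ((of x * of y) ^ (m' + 1) : Monoid.CoprodI f)).toList
        = cList x y (m' + 1) := equiv_zpow_toList x y hx1 hy1 _
    have hzinv : ((of x * of y : Monoid.CoprodI f))⁻¹ = of y * of x := by
      rw [mul_inv_rev, ← map_inv, ← map_inv, hxinv, hyinv]
    cases hL : (Word.equiv g).toList with
    | nil =>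
      have hg : g = 1 := by
        have hp := prod_equiv g
        rw [show Word.equiv g = Word.empty from Word.ext (by rw [hL]; rfl)] at hp
        rw [← hp, prod_empty]
      rw [hg]; exact one_mem _
    | cons p T =>
      obtain ⟨i0, a0⟩ := p
      have hlenL : (Word.equiv g).toList.length = T.length + 1 := by rw [hL]; rfl
      obtain ⟨⟨i1, a1⟩, hq⟩ : ∃ q, (Word.equiv g).toList.getLast? = some q := by
        rw [hL]
        exact Option.isSome_iff_exists.mp (List.getLast?_isSome.mpr (by simp))
      have hinvL : (Word.equiv g⁻¹).toList = invList (Word.equiv g).toList :=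
        equiv_inv_toList' g
      have hlen2m : ∀ k : ℕ, (Word.equiv ((of x * of y) ^ k : Monoid.CoprodI f)).toList.length
          = 2 * k := fun k => by rw [equiv_zpow_toList x y hx1 hy1, cList_length]
      cases i0 with
      | false =>
        -- first letter in A
        have e1 : (Word.equiv ((of x * of y) ^ (m' + 1) * g)).toList
            = cList x y (m' + 1) ++ (Word.equiv g).toList := by
          rw [← hcm]
          apply equiv_mul_toList
          intro p hp q hq2
          rw [hcm, cList_getLast?] at hp
          rw [hL, List.head?_cons] at hq2
          simp only [Option.mem_def, Option.some.injEq] at hp hq2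
          subst hp; subst hq2; simp
        cases i1 with
        | true =>
          -- case FT : descent with z⁻¹ * g
          have e2 : (Word.equiv (g * (of x * of y) ^ (m' + 1))).toList
              = (Word.equiv g).toList ++ cList x y (m' + 1) := by
            rw [← hcm]
            apply equiv_mul_toList
            intro p hp q hq2
            rw [hq] at hp
            rw [hcm, cList_head?] at hq2
            simp only [Option.mem_def, Option.some.injEq] at hp hq2
            subst hp; subst hq2; simp
          have e3 : (Word.equiv g).toList ++ cList x y (m' + 1)
              = cList x y (m' + 1) ++ (Word.equiv g).toList := by
            rw [← e1, ← e2, hcomm]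
          have ha0 : a0 = x := by
            have h4 := congrArg List.head? e3
            rw [hL] at h4
            simp only [cList, List.cons_append, List.head?_cons, Option.some.injEq,
              Sigma.mk.inj_iff, heq_eq_eq, true_and] at h4
            exact h4
          rw [ha0] at hL
          have hT : T ≠ [] := by
            intro hT0
            rw [hL, hT0] at hq
            simp only [List.getLast?_singleton, Option.some.injEq, Sigma.mk.inj_iff] at hq
            exact absurd hq.1 (by simp)
          obtain ⟨⟨j, c⟩, T', rfl⟩ : ∃ p T', T = p :: T' := by
            cases T with
            | nil => exact absurd rfl hT
            | cons a l => exact ⟨a, l, rfl⟩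
          have hj : j = true := by
            have hch := (Word.equiv g).chain_ne
            rw [hL] at hch
            have h5 := (List.isChain_cons_cons.mp hch).1
            cases j
            · exact absurd rfl h5
            · rfl
          subst hj
          have hdesc : (Word.equiv (of x * g)).toList = ⟨true, c⟩ :: T' :=
            descent g x hx2 hL
          have hfst : (Word.equiv (of x * g)).fstIdx = some true := by
            rw [Word.fstIdx, hdesc]; rfl
          have hlen2 : (Word.equiv (of y * (of x * g))).toList.length ≤ N := by
            rw [equiv_mul]
            refine (length_smul_le_of_fstIdx y _ hfst).trans ?_
            rw [hdesc]
            have := hlen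
            rw [hlenL] at this
            simp only [List.length_cons] at this ⊢
            omega
          have hg3 : of y * (of x * g) = (of x * of y)⁻¹ * g := by
            rw [hzinv, mul_assoc]
          have hcomm3 : Commute ((of x * of y)⁻¹ * g)
              (((of x * of y) ^ (m' + 1) : Monoid.CoprodI f)) :=
            Commute.mul_left hzw.inv_left hgw
          have hrec := ih ((of x * of y)⁻¹ * g) (m' + 1) hm (by rw [← hg3]; exact hlen2)
            hcomm3.eq
          have hgg : g = (of x * of y) * ((of x * of y)⁻¹ * g) := by
            rw [mul_inv_cancel_left]
          rw [hgg]
          exact mul_mem (Subgroup.mem_zpowers _) hrec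
        | false =>
          -- case FF : length contradiction
          exfalso
          have hfstinv : (Word.equiv g⁻¹).fstIdx = some false := by
            rw [Word.fstIdx, hinvL, head?_invList, hq]
            rfl
          have hb1 : (Word.equiv (of x * g⁻¹)).toList.length ≤ T.length + 1 := by
            rw [equiv_mul]
            refine (length_smul_le_of_fstIdx x _ hfstinv).trans ?_
            rw [hinvL, length_invList, hlenL]
          have hb2 : (Word.equiv (of y * (of x * g⁻¹))).toList.length ≤ T.length + 2 := by
            rw [equiv_mul]
            exact (length_smul_le y _).trans (by omega)
          have hid : (((of x * of y) ^ (m' + 1) : Monoid.CoprodI f))⁻¹ * g⁻¹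
              = ((of x * of y) ^ m')⁻¹ * (of y * (of x * g⁻¹)) := by
            rw [pow_succ', mul_inv_rev, mul_assoc]
            congr 1
            rw [hzinv, mul_assoc]
          have hb3 : (Word.equiv ((((of x * of y) ^ (m' + 1) : Monoid.CoprodI f))⁻¹ * g⁻¹)).toList.length
              ≤ 2 * m' + (T.length + 2) := by
            rw [hid]
            refine (length_mul_le _ _).trans ?_
            have h6 : (Word.equiv (((of x * of y) ^ m' : Monoid.CoprodI f))⁻¹).toList.length
                = 2 * m' := by rw [length_equiv_inv, hlen2m]
            omega
          have hb4 : (Word.equiv (g * (of x * of y) ^ (m' + 1))).toList.length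
              = 2 * (m' + 1) + (T.length + 1) := by
            rw [hcomm, e1, List.length_append, cList_length, hlenL]
          have hb5 : (Word.equiv ((g * (of x * of y) ^ (m' + 1))⁻¹)).toList.length
              = 2 * (m' + 1) + (T.length + 1) := by rw [length_equiv_inv, hb4]
          rw [mul_inv_rev] at hb5
          rw [hb5] at hb3
          omega
      | true =>
        cases i1 with
        | false =>
          -- case TF : use g⁻¹ for letter identification, descent with z * g
          have hgwinv : Commute g⁻¹ (((of x * of y) ^ (m' + 1)) : Monoid.CoprodI f) :=
            hgw.inv_left
          have hinvhead : (Word.equiv g⁻¹).toList.head? = some ⟨false, a1⁻¹⟩ := by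
            rw [hinvL, head?_invList, hq]
            rfl
          have hinvlast : (Word.equiv g⁻¹).toList.getLast? = some ⟨true, a0⁻¹⟩ := by
            rw [hinvL, getLast?_invList, hL]
            rfl
          have e1 : (Word.equiv ((of x * of y) ^ (m' + 1) * g⁻¹)).toList
              = cList x y (m' + 1) ++ (Word.equiv g⁻¹).toList := by
            rw [← hcm]
            apply equiv_mul_toList
            intro p hp q hq2
            rw [hcm, cList_getLast?] at hp
            rw [hinvhead] at hq2
            simp only [Option.mem_def, Option.some.injEq] at hp hq2
            subst hp; subst hq2; simp
          have e2 : (Word.equiv (g⁻¹ * (of x * of y) ^ (m' + 1))).toList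
              = (Word.equiv g⁻¹).toList ++ cList x y (m' + 1) := by
            rw [← hcm]
            apply equiv_mul_toList
            intro p hp q hq2
            rw [hinvlast] at hp
            rw [hcm, cList_head?] at hq2
            simp only [Option.mem_def, Option.some.injEq] at hp hq2
            subst hp; subst hq2; simp
          have e3 : (Word.equiv g⁻¹).toList ++ cList x y (m' + 1)
              = cList x y (m' + 1) ++ (Word.equiv g⁻¹).toList := by
            rw [← e1, ← e2, hgwinv.eq]
          have hinvne : (Word.equiv g⁻¹).toList ≠ [] := by
            intro h0
            rw [h0] at hinvlast
            simp at hinvlast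
          have ha0 : a0 = y := by
            have h4 := congrArg List.getLast? e3
            rw [List.getLast?_append_of_ne_nil _ (by simp [cList]), cList_getLast?,
              List.getLast?_append_of_ne_nil _ hinvne, hinvlast] at h4
            simp only [Option.some.injEq, Sigma.mk.inj_iff, heq_eq_eq, true_and] at h4
            exact inv_injective (by rw [hyinv]; exact h4.symm)
          rw [ha0] at hL
          have hT : T ≠ [] := by
            intro hT0
            rw [hL, hT0] at hq
            simp only [List.getLast?_singleton, Option.some.injEq, Sigma.mk.inj_iff] at hq
            exact absurd hq.1 (by simp)
          obtain ⟨⟨j, c⟩, T', rfl⟩ : ∃ p T', T = p :: T' := by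
            cases T with
            | nil => exact absurd rfl hT
            | cons a l => exact ⟨a, l, rfl⟩
          have hj : j = false := by
            have hch := (Word.equiv g).chain_ne
            rw [hL] at hch
            have h5 := (List.isChain_cons_cons.mp hch).1
            cases j
            · rfl
            · exact absurd rfl h5
          subst hj
          have hdesc : (Word.equiv (of y * g)).toList = ⟨false, c⟩ :: T' :=
            descent g y hy2 hL
          have hfst : (Word.equiv (of y * g)).fstIdx = some false := by
            rw [Word.fstIdx, hdesc]; rfl
          have hlen2 : (Word.equiv (of x * (of y * g))).toList.length ≤ N := by
            rw [equiv_mul]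
            refine (length_smul_le_of_fstIdx x _ hfst).trans ?_
            rw [hdesc]
            have := hlen
            rw [hlenL] at this
            simp only [List.length_cons] at this ⊢
            omega
          have hg3 : of x * (of y * g) = (of x * of y) * g := by
            rw [mul_assoc]
          have hcomm3 : Commute ((of x * of y) * g)
              (((of x * of y) ^ (m' + 1) : Monoid.CoprodI f)) :=
            Commute.mul_left hzw hgw
          have hrec := ih ((of x * of y) * g) (m' + 1) hm (by rw [← hg3]; exact hlen2)
            hcomm3.eq
          have hgg : g = (of x * of y)⁻¹ * ((of x * of y) * g) := by
            rw [inv_mul_cancel_left]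
          rw [hgg]
          exact mul_mem (inv_mem (Subgroup.mem_zpowers _)) hrec
        | true =>
          -- case TT : length contradiction
          exfalso
          have e2 : (Word.equiv (g * (of x * of y) ^ (m' + 1))).toList
              = (Word.equiv g).toList ++ cList x y (m' + 1) := by
            rw [← hcm]
            apply equiv_mul_toList
            intro p hp q hq2
            rw [hq] at hp
            rw [hcm, cList_head?] at hq2
            simp only [Option.mem_def, Option.some.injEq] at hp hq2
            subst hp; subst hq2; simp
          have hfstL : (Word.equiv g).fstIdx = some true := by
            rw [Word.fstIdx, hL]; rfl
          have hb1 : (Word.equiv (of y * g)).toList.length ≤ T.length + 1 := by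
            rw [equiv_mul]
            exact (length_smul_le_of_fstIdx y _ hfstL).trans (by rw [hlenL])
          have hb2 : (Word.equiv (of x * (of y * g))).toList.length ≤ T.length + 2 := by
            rw [equiv_mul]
            exact (length_smul_le x _).trans (by omega)
          have hid : ((of x * of y) ^ (m' + 1) : Monoid.CoprodI f) * g
              = (of x * of y) ^ m' * (of x * (of y * g)) := by
            rw [pow_succ]
            simp only [mul_assoc]
          have hb3 : (Word.equiv (((of x * of y) ^ (m' + 1) : Monoid.CoprodI f) * g)).toList.length
              ≤ 2 * m' + (T.length + 2) := by
            rw [hid]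
            refine (length_mul_le _ _).trans ?_
            have h6 := hlen2m m'
            omega
          have hb4 : (Word.equiv (g * (of x * of y) ^ (m' + 1))).toList.length
              = (T.length + 1) + 2 * (m' + 1) := by
            rw [e2, List.length_append, cList_length, hlenL]
          rw [hcomm] at hb4
          omega


theorem zpow_toList_length (hx1 : x ≠ 1) (hy1 : y ≠ 1) (m : ℤ) :
    (Word.equiv ((of x * of y) ^ m : Monoid.CoprodI f)).toList.length = 2 * m.natAbs := by
  cases m with
  | ofNat n =>
    rw [Int.ofNat_eq_coe, zpow_natCast, equiv_zpow_toList x y hx1 hy1, cList_length]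
    simp
  | negSucc n =>
    rw [zpow_negSucc, length_equiv_inv, equiv_zpow_toList x y hx1 hy1, cList_length]
    simp

theorem zpow_ne_one (hx1 : x ≠ 1) (hy1 : y ≠ 1) (m : ℤ) (hm : m ≠ 0) :
    ((of x * of y) ^ m : Monoid.CoprodI f) ≠ 1 := by
  intro h
  have h1 := congrArg (fun u => (Word.equiv u).toList.length) h
  simp only [zpow_toList_length x y hx1 hy1, equiv_one] at h1
  have : m.natAbs ≠ 0 := Int.natAbs_ne_zero.mpr hm
  simp [Word.empty] at h1
  omega

theorem mem_zpowers_of_commute (hx1 : x ≠ 1) (hx2 : x * x = 1) (hy1 : y ≠ 1)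
    (hy2 : y * y = 1) (w g : Monoid.CoprodI f)
    (hw : w ∈ Subgroup.zpowers (of x * of y)) (hw1 : w ≠ 1)
    (hc : g * w = w * g) : g ∈ Subgroup.zpowers (of x * of y) := by
  obtain ⟨m, rfl⟩ := Subgroup.mem_zpowers_iff.mp hw
  cases m with
  | ofNat n =>
    have hn : 0 < n := by
      rcases Nat.eq_zero_or_pos n with h0 | h0
      · exfalso; apply hw1; rw [h0]; simp
      · exact h0
    refine main_commute x y hx1 hx2 hy1 hy2 _ g n hn le_rfl ?_
    rw [Int.ofNat_eq_coe, zpow_natCast] at hc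
    exact hc
  | negSucc n =>
    refine main_commute x y hx1 hx2 hy1 hy2 _ g (n + 1) (Nat.succ_pos n) le_rfl ?_
    have h2 : Commute g ((((of x * of y) ^ (n + 1) : Monoid.CoprodI f))⁻¹) := by
      rw [← zpow_negSucc]; exact hc
    simpa using h2.inv_right.eq

theorem of_false_not_mem (hx1 : x ≠ 1) (hy1 : y ≠ 1) :
    of x ∉ Subgroup.zpowers (of x * of y) := by
  intro h
  obtain ⟨m, hm⟩ := Subgroup.mem_zpowers_iff.mp h
  have h1 := congrArg (fun u => (Word.equiv u).toList.length) hm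
  simp only [zpow_toList_length x y hx1 hy1, equiv_of x hx1] at h1
  simp at h1

end Main

section Transfer

universe u v

variable (A : Type u) (B : Type v) [Group A] [Group B]

/-- the two-element family of groups -/
def F : Bool → Type (max u v) := fun b => Bool.rec (ULift A) (ULift B) b

instance (b : Bool) : Group (F A B b) := by
  cases b
  · exact (inferInstance : Group (ULift A))
  · exact (inferInstance : Group (ULift B))

noncomputable instance (b : Bool) : DecidableEq (F A B b) := Classical.decEq _

/-- embedding of the binary coproduct into the indexed coproduct -/
def phi : Monoid.Coprod A B →* Monoid.CoprodI (F A B) :=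
  Monoid.Coprod.lift
    ((Monoid.CoprodI.of (M := F A B) (i := false)).comp
      (MulEquiv.ulift.symm.toMonoidHom : A →* ULift A))
    ((Monoid.CoprodI.of (M := F A B) (i := true)).comp
      (MulEquiv.ulift.symm.toMonoidHom : B →* ULift B))

/-- components of the inverse homomorphism -/
def psiComp : ∀ b : Bool, F A B b →* Monoid.Coprod A B
  | false => (Monoid.Coprod.inl).comp (MulEquiv.ulift.toMonoidHom : ULift A →* A)
  | true => (Monoid.Coprod.inr).comp (MulEquiv.ulift.toMonoidHom : ULift B →* B)

/-- the inverse homomorphism -/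
def psi : Monoid.CoprodI (F A B) →* Monoid.Coprod A B :=
  Monoid.CoprodI.lift (psiComp A B)

theorem psi_phi (g : Monoid.Coprod A B) : psi A B (phi A B g) = g := by
  have h : (psi A B).comp (phi A B) = MonoidHom.id _ := by
    apply Monoid.Coprod.hom_ext
    · ext a
      simp only [MonoidHom.comp_apply, MonoidHom.id_apply, phi, psi, psiComp,
        Monoid.Coprod.lift_apply_inl, Monoid.CoprodI.lift_of, MonoidHom.coe_comp,
        Function.comp_apply, MulEquiv.coe_toMonoidHom, MulEquiv.apply_symm_apply]
      rfl
    · ext b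
      simp only [MonoidHom.comp_apply, MonoidHom.id_apply, phi, psi, psiComp,
        Monoid.Coprod.lift_apply_inr, Monoid.CoprodI.lift_of, MonoidHom.coe_comp,
        Function.comp_apply, MulEquiv.coe_toMonoidHom, MulEquiv.apply_symm_apply]
      rfl
  exact DFunLike.congr_fun h g

theorem phi_injective : Function.Injective (phi A B) :=
  Function.LeftInverse.injective (psi_phi A B)

end Transfer

end Stmt11Aux

section Final

open Monoid

theorem stmt11 (k : ℕ) (hk : 0 < k) (A B : Type*) [Group A] [Group B]
    (hA : Subgroup.lowerCentralSeries (⊤ : Subgroup A) k = ⊥) (hB : Subgroup.lowerCentralSeries (⊤ : Subgroup B) k = ⊥)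
    (x : A) (y : B) (hx : orderOf x = 2) (hy : orderOf y = 2) :
    MaxNilK k (Subgroup.zpowers (Monoid.Coprod.inl x * Monoid.Coprod.inr y)) ∧
      ¬ Malnormal (Subgroup.zpowers (Monoid.Coprod.inl x * Monoid.Coprod.inr y)) ∧
      ¬ IsCSNk k (Monoid.Coprod A B) := by
  classical
  set ζ : Monoid.Coprod A B := Monoid.Coprod.inl x * Monoid.Coprod.inr y with hζdef
  have hx1 : x ≠ 1 := by intro h; rw [h] at hx; simp at hx
  have hy1 : y ≠ 1 := by intro h; rw [h] at hy; simp at hy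
  have hx2 : x * x = 1 := by
    have := pow_orderOf_eq_one x
    rwa [hx, pow_two] at this
  have hy2 : y * y = 1 := by
    have := pow_orderOf_eq_one y
    rwa [hy, pow_two] at this
  set x' : Stmt11Aux.F A B false := MulEquiv.ulift.symm x with hx'def
  set y' : Stmt11Aux.F A B true := MulEquiv.ulift.symm y with hy'def
  have hx1' : x' ≠ 1 := fun h => hx1 (by
    have := congrArg MulEquiv.ulift h
    rw [MulEquiv.apply_symm_apply] at this; exact this.trans (map_one _))
  have hy1' : y' ≠ 1 := fun h => hy1 (by
    have := congrArg MulEquiv.ulift h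
    rw [MulEquiv.apply_symm_apply] at this; exact this.trans (map_one _))
  have hx2' : x' * x' = 1 := by
    have h0 : (MulEquiv.ulift.symm x : ULift A) * MulEquiv.ulift.symm x = 1 := by
      rw [← map_mul, hx2, map_one]
    exact h0
  have hy2' : y' * y' = 1 := by
    have h0 : (MulEquiv.ulift.symm y : ULift B) * MulEquiv.ulift.symm y = 1 := by
      rw [← map_mul, hy2, map_one]
    exact h0
  have hφinl : Stmt11Aux.phi A B (Monoid.Coprod.inl x) = Monoid.CoprodI.of x' := by
    rw [Stmt11Aux.phi, Monoid.Coprod.lift_apply_inl]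
    rfl
  have hφinr : Stmt11Aux.phi A B (Monoid.Coprod.inr y) = Monoid.CoprodI.of y' := by
    rw [Stmt11Aux.phi, Monoid.Coprod.lift_apply_inr]
    rfl
  have hφζ : Stmt11Aux.phi A B ζ = Monoid.CoprodI.of x' * Monoid.CoprodI.of y' := by
    rw [hζdef, map_mul, hφinl, hφinr]
  have hzpow_ne : ∀ m : ℤ, m ≠ 0 → ζ ^ m ≠ 1 := by
    intro m hm h
    apply Stmt11Aux.zpow_ne_one x' y' hx1' hy1' m hm
    have := congrArg (Stmt11Aux.phi A B) h
    rwa [map_zpow, hφζ, map_one] at this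
  have hζ1 : ζ ≠ 1 := by simpa using hzpow_ne 1 one_ne_zero
  have hmemif : ∀ g : Monoid.Coprod A B,
      Stmt11Aux.phi A B g ∈ Subgroup.zpowers (Monoid.CoprodI.of x' * Monoid.CoprodI.of y') →
      g ∈ Subgroup.zpowers ζ := by
    intro g hg
    obtain ⟨kk, hkk⟩ := Subgroup.mem_zpowers_iff.mp hg
    have h2 : Stmt11Aux.phi A B (ζ ^ kk) = Stmt11Aux.phi A B g := by
      rw [map_zpow, hφζ, hkk]
    rw [← Stmt11Aux.phi_injective A B h2]
    exact Subgroup.mem_zpowers_iff.mpr ⟨kk, rfl⟩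
  have hcent : ∀ w g : Monoid.Coprod A B, w ∈ Subgroup.zpowers ζ → w ≠ 1 → g * w = w * g →
      g ∈ Subgroup.zpowers ζ := by
    intro w g hw hw1 hcomm
    apply hmemif
    refine Stmt11Aux.mem_zpowers_of_commute x' y' hx1' hx2' hy1' hy2'
      (Stmt11Aux.phi A B w) (Stmt11Aux.phi A B g) ?_ ?_ ?_
    · obtain ⟨kk, hkk⟩ := Subgroup.mem_zpowers_iff.mp hw
      exact Subgroup.mem_zpowers_iff.mpr ⟨kk, by rw [← hφζ, ← map_zpow, hkk]⟩
    · intro h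
      exact hw1 (Stmt11Aux.phi_injective A B (by rw [h, map_one]))
    · rw [← map_mul, ← map_mul, hcomm]
  have hnotmem : Monoid.Coprod.inl x ∉ Subgroup.zpowers ζ := by
    intro h
    obtain ⟨kk, hkk⟩ := Subgroup.mem_zpowers_iff.mp h
    apply Stmt11Aux.of_false_not_mem x' y' hx1' hy1'
    exact Subgroup.mem_zpowers_iff.mpr ⟨kk, by rw [← hφζ, ← map_zpow, hkk]; exact hφinl⟩
  -- SubNilK
  have hsub : SubNilK k (Subgroup.zpowers ζ) := by
    unfold SubNilK
    have h1 : (⊤ : Subgroup ↥(Subgroup.zpowers ζ)).lowerCentralSeries 1 = ⊥ := by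
      rw [Subgroup.lowerCentralSeries_one, commutator_def, Subgroup.commutator_eq_bot_iff_le_centralizer]
      intro a _
      rw [Subgroup.mem_centralizer_iff]
      intro b _
      obtain ⟨i, hi⟩ := Subgroup.mem_zpowers_iff.mp a.2
      obtain ⟨j, hj⟩ := Subgroup.mem_zpowers_iff.mp b.2
      apply Subtype.ext
      rw [Subgroup.coe_mul, Subgroup.coe_mul, ← hi, ← hj, zpow_mul_comm]
    have h2 := Subgroup.lowerCentralSeries_antitone (⊤ : Subgroup ↥(Subgroup.zpowers ζ)) hk
    rw [h1] at h2
    exact le_bot_iff.mp h2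
  -- maximality
  have hmax : ∀ K : Subgroup (Monoid.Coprod A B), SubNilK k K →
      Subgroup.zpowers ζ ≤ K → K = Subgroup.zpowers ζ := by
    intro K hK hle
    have hζK : ζ ∈ K := hle (Subgroup.mem_zpowers ζ)
    have hex : ∃ n, (⊤ : Subgroup ↥K).lowerCentralSeries n = ⊥ := ⟨k, hK⟩
    have hfind := Nat.find_spec hex
    have hn0pos : 0 < Nat.find hex := by
      rcases Nat.eq_zero_or_pos (Nat.find hex) with h0 | h0
      · exfalso
        rw [h0, Subgroup.lowerCentralSeries_zero] at hfind
        have h2 : (⟨ζ, hζK⟩ : ↥K) ∈ (⊤ : Subgroup ↥K) := Subgroup.mem_top _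
        rw [hfind, Subgroup.mem_bot] at h2
        exact hζ1 (congrArg Subtype.val h2)
      · exact h0
    have hpred : (⊤ : Subgroup ↥K).lowerCentralSeries (Nat.find hex - 1) ≠ ⊥ :=
      Nat.find_min hex (by omega)
    have hstep : (⊤ : Subgroup ↥K).lowerCentralSeries ((Nat.find hex - 1) + 1) = ⊥ := by
      have hconv : Nat.find hex - 1 + 1 = Nat.find hex := by omega
      rw [hconv]
      exact hfind
    rw [Subgroup.lowerCentralSeries_succ] at hstep
    have hcentral := (Subgroup.commutator_eq_bot_iff_le_centralizer).mp hstep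
    obtain ⟨c, hcmem, hc1⟩ : ∃ c, c ∈ (⊤ : Subgroup ↥K).lowerCentralSeries (Nat.find hex - 1) ∧ c ≠ 1 := by
      by_contra hcon
      push_neg at hcon
      apply hpred
      ext u
      simp only [Subgroup.mem_bot]
      exact ⟨fun hu => hcon u hu, fun hu => hu ▸ Subgroup.one_mem _⟩
    have hccomm : ∀ gK : ↥K, (c : Monoid.Coprod A B) * gK = gK * c := by
      intro gK
      have h3 := hcentral hcmem
      rw [Subgroup.mem_centralizer_iff] at h3
      have h4 := h3 gK (by simp)
      exact (congrArg Subtype.val h4).symm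
    have hcg : (c : Monoid.Coprod A B) ≠ 1 := by
      intro h
      exact hc1 (Subtype.ext h)
    have hcζ : (c : Monoid.Coprod A B) * ζ = ζ * (c : Monoid.Coprod A B) :=
      hccomm ⟨ζ, hζK⟩
    have hczp : (c : Monoid.Coprod A B) ∈ Subgroup.zpowers ζ :=
      hcent ζ (c : Monoid.Coprod A B) (Subgroup.mem_zpowers ζ) hζ1 hcζ
    apply le_antisymm _ hle
    intro g hg
    have hgc : g * (c : Monoid.Coprod A B) = (c : Monoid.Coprod A B) * g :=
      (hccomm ⟨g, hg⟩).symm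
    exact hcent (c : Monoid.Coprod A B) g hczp hcg hgc
  -- conjugation computation
  have hxinv0 : x⁻¹ = x := inv_eq_of_mul_eq_one_right hx2
  have hyinv0 : y⁻¹ = y := inv_eq_of_mul_eq_one_right hy2
  have hxinv : (Monoid.Coprod.inl x : Monoid.Coprod A B)⁻¹ = Monoid.Coprod.inl x := by
    rw [← map_inv, hxinv0]
  have hxx : (Monoid.Coprod.inl x : Monoid.Coprod A B) * Monoid.Coprod.inl x = 1 := by
    rw [← map_mul, hx2, map_one]
  have hζinv : ζ⁻¹ = Monoid.Coprod.inr y * Monoid.Coprod.inl x := by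
    rw [hζdef, mul_inv_rev, ← map_inv, ← map_inv, hxinv0, hyinv0]
  have hconj : Monoid.Coprod.inl x * ζ * (Monoid.Coprod.inl x)⁻¹ = ζ⁻¹ := by
    rw [hζinv, hζdef, hxinv,
      show (Monoid.Coprod.inl x * (Monoid.Coprod.inl x * Monoid.Coprod.inr y) *
        Monoid.Coprod.inl x : Monoid.Coprod A B)
        = (Monoid.Coprod.inl x * Monoid.Coprod.inl x) * (Monoid.Coprod.inr y *
          Monoid.Coprod.inl x) by simp [mul_assoc], hxx, one_mul]
  have hnotmal : ¬ Malnormal (Subgroup.zpowers ζ) := by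
    intro hmal
    apply hζ1
    refine hmal (Monoid.Coprod.inl x) hnotmem ζ (Subgroup.mem_zpowers ζ) ?_
    rw [hconj]
    exact inv_mem (Subgroup.mem_zpowers ζ)
  refine ⟨⟨hsub, hmax⟩, hnotmal, ?_⟩
  intro hcsn
  exact hnotmal (hcsn _ ⟨hsub, hmax⟩)

end Final
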